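/- Perturbation identities for the Drazin inverse of quaternion matrices: let A, E, B, X, Y be n×n quaternion matrices with B = A + E. Assume X is a k-Drazin inverse of A, Y is an m-Drazin inverse of B, E = (A * X) * E * (A * X), and every right eigenvalue λ of X * E satisfies ‖λ‖ < 1. Then: (i) A * X = B * Y; (ii) Y - X = -(Y * E * X) and Y - X = -(X * E * Y); (iii) 1 + X * E and 1 + E * X are units of the matrix ring, and (1 + X * E) * Y = X and Y * (1 + E * X) = X (equivalently Y = (1 + X * E)⁻¹ * X = X * (1 + E * X)⁻¹). -/
import Mathlib


notation "ℍ" => Quaternion ℝ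

open Matrix in
/-- Over the quaternions, a square matrix with trivial kernel (for `mulVec`) is a unit. -/
lemma isUnit_of_mulVec_ker {n : ℕ} {M : Matrix (Fin n) (Fin n) ℍ}
    (h : ∀ x : Fin n → ℍ, M.mulVec x = 0 → x = 0) : IsUnit M := by
  -- key identity: (star ∘ x) ᵥ* Mᴴ = star ∘ (M *ᵥ x)
  have key : ∀ x : Fin n → ℍ, Matrix.vecMul (fun i => star (x i)) Mᴴ = fun j => star ((M *ᵥ x) j) := by
    intro x
    funext j
    simp [Matrix.vecMul, Matrix.mulVec, dotProduct, Matrix.conjTranspose_apply,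
      star_sum, StarMul.star_mul]
  -- Mᴴ.vecMulLinear is injective
  have hinj : Function.Injective (Mᴴ.vecMulLinear) := by
    rw [← LinearMap.ker_eq_bot, LinearMap.ker_eq_bot']
    intro c hc
    have hc' : (fun i => star ((fun i => star (c i)) i)) = c := by funext i; simp
    have h2 : M *ᵥ (fun i => star (c i)) = 0 := by
      have := key (fun i => star (c i))
      rw [hc'] at this
      have hc0 : c ᵥ* Mᴴ = 0 := hc
      funext j
      have := congrFun (this.symm.trans hc0) j
      simpa using congrArg star this
    have := h _ h2
    funext i
    have := congrFun this i
    simpa using congrArg star this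
  have hsurj : Function.Surjective (Mᴴ.vecMul) :=
    (LinearMap.injective_iff_surjective).mp hinj
  obtain ⟨B, hBM⟩ := Matrix.vecMul_surjective_iff_exists_left_inverse.mp hsurj
  -- B is also injective on vecMul hence surjective hence has left inverse C
  have hBinj : Function.Injective (B.vecMulLinear) := by
    intro x y hxy
    have : (x ᵥ* B) ᵥ* Mᴴ = (y ᵥ* B) ᵥ* Mᴴ := by
      simpa [Matrix.vecMulLinear_apply] using congrArg (· ᵥ* Mᴴ) hxy
    simpa [Matrix.vecMul_vecMul, hBM] using this
  have hBsurj : Function.Surjective (B.vecMul) :=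
    (LinearMap.injective_iff_surjective).mp hBinj
  obtain ⟨C, hCB⟩ := Matrix.vecMul_surjective_iff_exists_left_inverse.mp hBsurj
  have hMB : Mᴴ * B = 1 := by
    have hC : C = Mᴴ := by
      calc C = C * (B * Mᴴ) := by rw [hBM, mul_one]
      _ = (C * B) * Mᴴ := by rw [mul_assoc]
      _ = Mᴴ := by rw [hCB, one_mul]
    rw [← hC]; exact hCB
  have : IsUnit Mᴴ := ⟨⟨Mᴴ, B, hMB, hBM⟩, rfl⟩
  exact (Matrix.isUnit_conjTranspose M).mp this

section RingLemmas

variable {R : Type*} [Ring R]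

lemma drazin_pow_left {B X : R} (h2 : X * B * X = X) (h3 : B * X = X * B) :
    ∀ j : ℕ, X = X ^ (j + 1) * B ^ j := by
  have hc : Commute B X := h3
  intro j
  induction j with
  | zero => simp
  | succ j ih =>
    calc X = X * B * X := h2.symm
    _ = X ^ (j + 1) * B ^ j * B * X := by rw [← ih]
    _ = X ^ (j + 1) * B ^ (j + 1) * X := by rw [mul_assoc (X ^ (j + 1)), ← pow_succ]
    _ = X ^ (j + 1) * (X * B ^ (j + 1)) := by rw [mul_assoc, (hc.pow_left (j + 1)).eq]
    _ = X ^ (j + 2) * B ^ (j + 1) := by rw [← mul_assoc, ← pow_succ]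

lemma drazin_pow_right {B X : R} (h2 : X * B * X = X) (h3 : B * X = X * B) :
    ∀ j : ℕ, X = B ^ j * X ^ (j + 1) := by
  have hc : Commute B X := h3
  intro j
  induction j with
  | zero => simp
  | succ j ih =>
    calc X = X * B * X := h2.symm
    _ = X * B * (B ^ j * X ^ (j + 1)) := by rw [← ih]
    _ = X * (B * B ^ j) * X ^ (j + 1) := by noncomm_ring
    _ = X * B ^ (j + 1) * X ^ (j + 1) := by rw [← pow_succ']
    _ = B ^ (j + 1) * X * X ^ (j + 1) := by rw [← (hc.pow_left (j + 1)).eq]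
    _ = B ^ (j + 1) * (X * X ^ (j + 1)) := by rw [mul_assoc]
    _ = B ^ (j + 1) * X ^ (j + 2) := by rw [← pow_succ']

lemma drazin_pow_ge {B X : R} {k : ℕ} (h1 : B ^ k * X * B = B ^ k) :
    ∀ l, k ≤ l → B ^ l * X * B = B ^ l := by
  intro l hl
  have hpow : B ^ l = B ^ (l - k) * B ^ k := by rw [← pow_add, Nat.sub_add_cancel hl]
  calc B ^ l * X * B = B ^ (l - k) * (B ^ k * X * B) := by rw [hpow]; noncomm_ring
  _ = B ^ (l - k) * B ^ k := by rw [h1]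
  _ = B ^ l := hpow.symm

lemma drazin_unique {B X1 X2 : R} {k1 k2 : ℕ}
    (h11 : B ^ k1 * X1 * B = B ^ k1) (h12 : X1 * B * X1 = X1) (h13 : B * X1 = X1 * B)
    (h21 : B ^ k2 * X2 * B = B ^ k2) (h22 : X2 * B * X2 = X2) (h23 : B * X2 = X2 * B) :
    X1 = X2 := by
  set l := max k1 k2 with hldef
  have hl1 : B ^ l * X1 * B = B ^ l := drazin_pow_ge h11 l (le_max_left _ _)
  have hl2 : B ^ l * X2 * B = B ^ l := drazin_pow_ge h21 l (le_max_right _ _)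
  have hc1 : Commute B X1 := h13
  have hc2 : Commute B X2 := h23
  have pw1 : X1 = X1 ^ (l + 1) * B ^ l := drazin_pow_left h12 h13 l
  have pw2 : X2 = B ^ l * X2 ^ (l + 1) := drazin_pow_right h22 h23 l
  have e1 : X1 = X1 * X2 * B := by
    calc X1 = X1 ^ (l + 1) * B ^ l := pw1
    _ = X1 ^ (l + 1) * (B ^ l * X2 * B) := by rw [hl2]
    _ = X1 ^ (l + 1) * B ^ l * X2 * B := by rw [← mul_assoc, ← mul_assoc]
    _ = X1 * X2 * B := by rw [← pw1]
  have e2 : X2 = X1 * X2 * B := by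
    calc X2 = B ^ l * X2 ^ (l + 1) := pw2
    _ = B ^ l * X1 * B * X2 ^ (l + 1) := by rw [hl1]
    _ = B ^ l * X1 * (B * X2 ^ (l + 1)) := by rw [mul_assoc]
    _ = B ^ l * X1 * (X2 ^ (l + 1) * B) := by rw [(hc2.pow_right (l + 1)).eq]
    _ = B ^ l * (X1 * (X2 ^ (l + 1) * B)) := by rw [mul_assoc]
    _ = X1 * B ^ l * (X2 ^ (l + 1) * B) := by
        rw [← mul_assoc, ← (hc1.pow_left l).eq]
    _ = X1 * (B ^ l * X2 ^ (l + 1)) * B := by noncomm_ring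
    _ = X1 * X2 * B := by rw [← pw2]
  exact e1.trans e2.symm

end RingLemmas

section RingLemmas
variable {R : Type*} [Ring R]

/-- Construction of the perturbed Drazin inverse, at the level of an abstract ring. -/
lemma drazin_perturb {A E B X : R} {k : ℕ}
    (hB : B = A + E) (h1 : A ^ k * X * A = A ^ k) (h2 : X * A * X = X) (h3 : A * X = X * A)
    (hE : E = (A * X) * E * (A * X))
    (hU : IsUnit (1 + X * E)) (hV : IsUnit (1 + E * X)) :
    ∃ Z : R, B ^ k * Z * B = B ^ k ∧ Z * B * Z = Z ∧ B * Z = Z * B ∧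
      B * Z = A * X ∧ (1 + X * E) * Z = X ∧ Z * (1 + E * X) = X := by
  obtain ⟨u, hu⟩ := hU
  obtain ⟨v, hv⟩ := hV
  have hP2 : (A * X) * (A * X) = A * X := by
    calc (A * X) * (A * X) = A * (X * A * X) := by noncomm_ring
    _ = A * X := by rw [h2]
  have hPA : A * (A * X) = (A * X) * A := by
    calc A * (A * X) = A * (X * A) := by rw [h3]
    _ = (A * X) * A := by noncomm_ring
  have hPE : (A * X) * E = E := by
    nth_rewrite 1 [hE]
    rw [show A * X * (A * X * E * (A * X)) = (A * X * (A * X)) * E * (A * X) from by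
      noncomm_ring, hP2, ← hE]
  have hEP : E * (A * X) = E := by
    nth_rewrite 1 [hE]
    rw [show A * X * E * (A * X) * (A * X) = A * X * E * (A * X * (A * X)) from by
      noncomm_ring, hP2, ← hE]
  have hPX : (A * X) * X = X := by rw [h3]; exact h2
  have hXB : X * B = (1 + X * E) * (A * X) := by
    calc X * B = X * A + X * E := by rw [hB]; noncomm_ring
    _ = A * X + X * E := by rw [h3]
    _ = A * X + X * (E * (A * X)) := by rw [hEP]
    _ = (1 + X * E) * (A * X) := by noncomm_ring
  have hPU : (A * X) * (1 + X * E) = (1 + X * E) * (A * X) := by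
    calc (A * X) * (1 + X * E) = A * X + ((A * X) * X) * E := by noncomm_ring
    _ = A * X + X * E := by rw [hPX]
    _ = A * X + X * (E * (A * X)) := by rw [hEP]
    _ = (1 + X * E) * (A * X) := by noncomm_ring
  have hBX : B * X = (A * X) * (1 + E * X) := by
    calc B * X = A * X + E * X := by rw [hB]; noncomm_ring
    _ = A * X + ((A * X) * E) * X := by rw [hPE]
    _ = (A * X) * (1 + E * X) := by noncomm_ring
  have hUXV : (1 + X * E) * X = X * (1 + E * X) := by noncomm_ring
  set Z : R := ↑u⁻¹ * X with hZ
  have huZ : (↑u : R) * Z = X := by rw [hZ, ← mul_assoc, u.mul_inv, one_mul]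
  have hZv : Z = X * ↑v⁻¹ := by
    have h' : (↑u : R) * (X * ↑v⁻¹) = X := by
      calc (↑u : R) * (X * ↑v⁻¹) = ((↑u : R) * X) * ↑v⁻¹ := by rw [mul_assoc]
      _ = (X * (↑v : R)) * ↑v⁻¹ := by rw [hu, hv, hUXV]
      _ = X := by rw [mul_assoc, v.mul_inv, mul_one]
    exact (Units.mul_right_inj u).mp (huZ.trans h'.symm)
  have hZB : Z * B = A * X := by
    calc Z * B = ↑u⁻¹ * (X * B) := by rw [hZ, mul_assoc]
    _ = ↑u⁻¹ * ((↑u : R) * (A * X)) := by rw [hXB, hu]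
    _ = A * X := by rw [← mul_assoc, u.inv_mul, one_mul]
  have hBZ : B * Z = A * X := by
    calc B * Z = (B * X) * ↑v⁻¹ := by rw [hZv, ← mul_assoc]
    _ = (A * X) * ((↑v : R) * ↑v⁻¹) := by rw [hBX, hv, mul_assoc]
    _ = A * X := by rw [v.mul_inv, mul_one]
  have hPuinv : (A * X) * (↑u⁻¹ : R) = ↑u⁻¹ * (A * X) := by
    have hcc : Commute (↑u : R) (A * X) := by rw [hu]; exact hPU.symm
    exact (hcc.units_inv_left).eq.symm
  have hZBZ : Z * B * Z = Z := by
    calc Z * B * Z = (A * X) * Z := by rw [hZB]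
    _ = (A * X) * (↑u⁻¹ * X) := by rw [hZ]
    _ = ↑u⁻¹ * ((A * X) * X) := by rw [← mul_assoc, hPuinv, mul_assoc]
    _ = ↑u⁻¹ * X := by rw [hPX]
    _ = Z := hZ.symm
  have hstep : B - B * (A * X) = A - (A * X) * A := by
    calc B - B * (A * X) = A + E - (A * (A * X) + E * (A * X)) := by rw [hB]; noncomm_ring
    _ = A + E - (A * (A * X) + E) := by rw [hEP]
    _ = A - A * (A * X) := by abel
    _ = A - (A * X) * A := by rw [hPA]
  have hq : ∀ j : ℕ, B ^ j - B ^ j * (A * X) = A ^ j - A ^ j * (A * X) := by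
    intro j
    induction j with
    | zero => simp
    | succ j ih =>
      calc B ^ (j + 1) - B ^ (j + 1) * (A * X) = B ^ j * (B - B * (A * X)) := by
            rw [pow_succ]; noncomm_ring
      _ = B ^ j * (A - (A * X) * A) := by rw [hstep]
      _ = (B ^ j - B ^ j * (A * X)) * A := by noncomm_ring
      _ = (A ^ j - A ^ j * (A * X)) * A := by rw [ih]
      _ = A ^ (j + 1) - A ^ j * ((A * X) * A) := by rw [pow_succ]; noncomm_ring
      _ = A ^ (j + 1) - A ^ j * (A * (A * X)) := by rw [← hPA]
      _ = A ^ (j + 1) - A ^ (j + 1) * (A * X) := by rw [pow_succ]; noncomm_ring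
  have hAkP : A ^ k * (A * X) = A ^ k := by
    calc A ^ k * (A * X) = A ^ k * (X * A) := by rw [h3]
    _ = A ^ k := by rw [← mul_assoc, h1]
  have hBkP : B ^ k * (A * X) = B ^ k := by
    have hqk := hq k
    rw [hAkP, sub_self] at hqk
    exact (sub_eq_zero.mp hqk).symm
  refine ⟨Z, ?_, hZBZ, hBZ.trans hZB.symm, hBZ, ?_, ?_⟩
  · rw [mul_assoc, hZB]; exact hBkP
  · rw [← hu]; exact huZ
  · rw [hZv, ← hv, mul_assoc, v.inv_mul, mul_one]

end RingLemmas

/-- `X` is a `k`-Drazin inverse of the square quaternion matrix `A`. -/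
def IsDrazinInverse {n : ℕ} (A X : Matrix (Fin n) (Fin n) ℍ) (k : ℕ) : Prop :=
  A ^ k * X * A = A ^ k ∧ X * A * X = X ∧ A * X = X * A

/-- `lam` is a right eigenvalue of the quaternion matrix `M`. -/
def IsRightEigenvalue {n : ℕ} (M : Matrix (Fin n) (Fin n) ℍ) (lam : ℍ) : Prop :=
  ∃ x : Fin n → ℍ, x ≠ 0 ∧ M.mulVec x = fun i => x i * lam

/-- Perturbation identities for the Drazin inverse of quaternion matrices, under the
spectral-radius hypothesis on `X * E`. -/
theorem drazin_perturbation_identities {n : ℕ}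
    (A E B X Y : Matrix (Fin n) (Fin n) ℍ) (k m : ℕ)
    (hB : B = A + E)
    (hX : IsDrazinInverse A X k) (hY : IsDrazinInverse B Y m)
    (hE : E = (A * X) * E * (A * X))
    (hrho : ∀ lam : ℍ, IsRightEigenvalue (X * E) lam → ‖lam‖ < 1) :
    A * X = B * Y ∧
    Y - X = -(Y * E * X) ∧ Y - X = -(X * E * Y) ∧
    IsUnit (1 + X * E) ∧ IsUnit (1 + E * X) ∧
    (1 + X * E) * Y = X ∧ Y * (1 + E * X) = X := by
  obtain ⟨h1, h2, h3⟩ := hX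
  obtain ⟨g1, g2, g3⟩ := hY
  have hU : IsUnit (1 + X * E) := by
    refine isUnit_of_mulVec_ker fun x hx => ?_
    by_contra hx0
    rw [Matrix.add_mulVec, Matrix.one_mulVec] at hx
    have h0 : (X * E).mulVec x = -x := eq_neg_of_add_eq_zero_right hx
    have heig : (X * E).mulVec x = fun i => x i * (-1) := by
      funext i
      rw [h0]
      simp [mul_neg_one]
    have hc := hrho (-1) ⟨x, hx0, heig⟩
    rw [norm_neg, norm_one] at hc
    exact lt_irrefl 1 hc
  have hV : IsUnit (1 + E * X) := by
    refine isUnit_of_mulVec_ker fun x hx => ?_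
    by_contra hx0
    rw [Matrix.add_mulVec, Matrix.one_mulVec] at hx
    have h0 : (E * X).mulVec x = -x := eq_neg_of_add_eq_zero_right hx
    have hy0 : X.mulVec x ≠ 0 := by
      intro hy
      apply hx0
      have hEXx : (E * X).mulVec x = E.mulVec (X.mulVec x) := (Matrix.mulVec_mulVec ..).symm
      rw [h0, hy, Matrix.mulVec_zero] at hEXx
      simpa using hEXx.symm
    have heig : (X * E).mulVec (X.mulVec x) = fun i => (X.mulVec x) i * (-1) := by
      have hcomp : (X * E).mulVec (X.mulVec x) = X.mulVec ((E * X).mulVec x) := by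
        rw [Matrix.mulVec_mulVec, Matrix.mulVec_mulVec, mul_assoc]
      rw [hcomp, h0, Matrix.mulVec_neg]
      funext i
      simp [mul_neg_one]
    have hc := hrho (-1) ⟨X.mulVec x, hy0, heig⟩
    rw [norm_neg, norm_one] at hc
    exact lt_irrefl 1 hc
  obtain ⟨Z, c1, c2, c3, hBZ, hUZ, hZV⟩ := drazin_perturb hB h1 h2 h3 hE hU hV
  have hYZ : Y = Z := drazin_unique g1 g2 g3 c1 c2 c3
  have hUY : (1 + X * E) * Y = X := by rw [hYZ]; exact hUZ
  have hYV : Y * (1 + E * X) = X := by rw [hYZ]; exact hZV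
  refine ⟨by rw [hYZ]; exact hBZ.symm, ?_, ?_, hU, hV, hUY, hYV⟩
  · calc Y - X = Y - Y * (1 + E * X) := by rw [hYV]
    _ = -(Y * E * X) := by noncomm_ring
  · calc Y - X = Y - (1 + X * E) * Y := by rw [hUY]
    _ = -(X * E * Y) := by noncomm_ring
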